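/- arXiv:2604.12433 — 2 statements merged into one kernel-verified Lean document; each statement's English description precedes it below -/
import Mathlib

section
/- Let M be a nonsingular square matrix over a field indexed by a finite set V. Define P_{τδτ}(M,z) = Σ_{A⊆V} z^{rank(M) − corank((M+I_A)[A])} and P_τ(N,z) = Σ_{A⊆V} z^{rank(N+I_A)}. Then P_{τδτ}(M, z) = P_τ(M⁻¹, z). -/
/-!
Write `I_A = E Eᵀ`, where `E : V × A` is the matrix of extension by zero. Then
`M⁻¹ + I_A = M⁻¹ (1 + (M E) Eᵀ)` and `(M + I_A)[A] = 1 + Eᵀ (M E)`. For any `B`, `C` the maps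
`x ↦ C x` and `y ↦ -B y` are inverse isomorphisms between the kernels of `1 + B C` and `1 + C B`,
so `|V| - rank (M⁻¹ + I_A) = corank ((M + I_A)[A])`. As `rank M = |V|`, the two sums agree
term by term.
-/

open Matrix Polynomial

/-- Principal submatrix of `M` on the index set `A`. -/
def psub {V F : Type*} [Fintype V] [DecidableEq V] [Field F]
    (M : Matrix V V F) (A : Finset V) : Matrix A A F :=
  M.submatrix (fun a => a.1) (fun a => a.1)

/-- Diagonal 0/1 matrix with 1's exactly at positions in `A`. -/
def indDiag {V F : Type*} [Fintype V] [DecidableEq V] [Field F]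
    (A : Finset V) : Matrix V V F :=
  Matrix.diagonal (fun v => if v ∈ A then (1 : F) else 0)

namespace LinearMap

variable {R U W : Type*} [Ring R] [AddCommGroup U] [Module R U] [AddCommGroup W] [Module R W]

theorem map_mem_ker_one_add_comp {B : W →ₗ[R] U} {C : U →ₗ[R] W} {x : U}
    (hx : x ∈ ker (1 + B ∘ₗ C)) : C x ∈ ker (1 + C ∘ₗ B) := by
  rw [mem_ker] at hx ⊢
  change C x + C (B (C x)) = 0
  rw [← map_add]
  exact (congrArg C hx).trans (map_zero C)

theorem eq_neg_of_mem_ker_one_add_comp {B : W →ₗ[R] U} {C : U →ₗ[R] W} {x : U}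
    (hx : x ∈ ker (1 + B ∘ₗ C)) : x = -B (C x) :=
  eq_neg_of_add_eq_zero_left hx

def kerOneAddCompEquiv (B : W →ₗ[R] U) (C : U →ₗ[R] W) :
    ker (1 + B ∘ₗ C) ≃ₗ[R] ker (1 + C ∘ₗ B) :=
  LinearEquiv.ofLinearMap (C.restrict fun _ => map_mem_ker_one_add_comp)
    ((-B).restrict fun _ hy => by simpa using map_mem_ker_one_add_comp hy)
    (by ext y; simp [← eq_neg_of_mem_ker_one_add_comp y.2])
    (by ext x; simp [← eq_neg_of_mem_ker_one_add_comp x.2])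

end LinearMap

namespace Matrix

variable {m n K : Type*} [Fintype m] [Fintype n] [DecidableEq m] [DecidableEq n] [Field K]

omit [DecidableEq n] in
theorem mulVecLin_one_add_mul (B : Matrix m n K) (C : Matrix n m K) :
    (1 + B * C).mulVecLin = 1 + B.mulVecLin ∘ₗ C.mulVecLin := by
  rw [mulVecLin_add, mulVecLin_mul, mulVecLin_one]
  rfl

theorem card_add_rank_one_add_mul_comm (B : Matrix m n K) (C : Matrix n m K) :
    Fintype.card n + (1 + B * C).rank = Fintype.card m + (1 + C * B).rank := by
  have hBC := (1 + B * C).mulVecLin.finrank_range_add_finrank_ker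
  have hCB := (1 + C * B).mulVecLin.finrank_range_add_finrank_ker
  have hker := (LinearMap.kerOneAddCompEquiv B.mulVecLin C.mulVecLin).finrank_eq
  rw [Module.finrank_fintype_fun_eq_card, mulVecLin_one_add_mul] at hBC hCB
  rw [rank, rank, mulVecLin_one_add_mul, mulVecLin_one_add_mul]
  omega

end Matrix

def inclMatrix {V : Type*} [DecidableEq V] (R : Type*) [Zero R] [One R] (A : Finset V) :
    Matrix V A R :=
  (1 : Matrix V V R).submatrix id (↑)

section

variable {V F : Type*} [Fintype V] [DecidableEq V] [Field F]

theorem inclMatrix_transpose_mul_inclMatrix (A : Finset V) :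
    (inclMatrix F A)ᵀ * inclMatrix F A = 1 := by
  rw [inclMatrix, transpose_submatrix, transpose_one,
    ← submatrix_mul _ _ _ _ _ Function.bijective_id, Matrix.mul_one,
    submatrix_one _ Subtype.val_injective]

theorem inclMatrix_mul_inclMatrix_transpose (A : Finset V) :
    inclMatrix F A * (inclMatrix F A)ᵀ = indDiag A := by
  ext v w
  by_cases hv : v ∈ A
  · rw [mul_apply, Fintype.sum_eq_single ⟨v, hv⟩]
    · simp [inclMatrix, indDiag, one_apply, diagonal_apply, hv, eq_comm]
    · intro a ha
      simp [inclMatrix, one_apply, Ne.symm (Subtype.coe_ne_coe.mpr ha)]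
  · refine (Fintype.sum_eq_zero _ fun a => ?_).trans (by simp [indDiag, diagonal_apply, hv])
    simp [inclMatrix, one_apply, show v ≠ a from fun h => hv (h ▸ a.2)]

theorem psub_eq_inclMatrix_transpose_mul_mul (N : Matrix V V F) (A : Finset V) :
    psub N A = (inclMatrix F A)ᵀ * N * inclMatrix F A := by
  ext a b
  simp [psub, inclMatrix, mul_apply, one_apply]

theorem psub_add_indDiag (M : Matrix V V F) (A : Finset V) :
    psub (M + indDiag A) A = 1 + (inclMatrix F A)ᵀ * (M * inclMatrix F A) := by
  rw [psub_eq_inclMatrix_transpose_mul_mul, ← inclMatrix_mul_inclMatrix_transpose,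
    Matrix.mul_add, Matrix.add_mul, ← Matrix.mul_assoc _ (inclMatrix F A),
    inclMatrix_transpose_mul_inclMatrix, Matrix.one_mul, inclMatrix_transpose_mul_inclMatrix,
    Matrix.mul_assoc, add_comm]

theorem inv_add_indDiag {M : Matrix V V F} (hM : IsUnit M) (A : Finset V) :
    M⁻¹ + indDiag A = M⁻¹ * (1 + M * inclMatrix F A * (inclMatrix F A)ᵀ) := by
  rw [Matrix.mul_add, Matrix.mul_one, ← Matrix.mul_assoc, ← Matrix.mul_assoc,
    nonsing_inv_mul _ ((isUnit_iff_isUnit_det M).mp hM), Matrix.one_mul,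
    inclMatrix_mul_inclMatrix_transpose]

theorem card_add_rank_inv_add_indDiag {M : Matrix V V F} (hM : IsUnit M) (A : Finset V) :
    A.card + (M⁻¹ + indDiag A).rank = Fintype.card V + (psub (M + indDiag A) A).rank := by
  have h := card_add_rank_one_add_mul_comm (M * inclMatrix F A) (inclMatrix F A)ᵀ
  rwa [Fintype.card_coe, ← psub_add_indDiag,
    ← rank_mul_eq_right_of_isUnit_det M⁻¹ _ (isUnit_nonsing_inv_det_iff.mpr
      ((isUnit_iff_isUnit_det M).mp hM)),
    ← inv_add_indDiag hM] at h

end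

theorem partialTauDeltaTau_eq_partialTau_inv
    {V F : Type*} [Fintype V] [DecidableEq V] [Field F]
    (M : Matrix V V F) (hM : IsUnit M) :
    (∑ A : Finset V, (X : Polynomial ℤ) ^
        (M.rank - (A.card - (psub (M + indDiag A) A).rank))) =
      ∑ A : Finset V, (X : Polynomial ℤ) ^ (M⁻¹ + indDiag A).rank := by
  refine Finset.sum_congr rfl fun A _ => congrArg _ ?_
  have hrank := card_add_rank_inv_add_indDiag hM A
  have hle := (psub (M + indDiag A) A).rank_le_card_width
  rw [Fintype.card_coe] at hle
  rw [rank_of_isUnit M hM]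
  omega
end

section
/- Let M be a square matrix over GF(2) indexed by a finite set V and let v ∈ V be an isolated index, meaning M_{uv}=M_{vu}=0 for all u ≠ v. Let M' = M[V∖{v}]. Then the partial-⟨δ⟩ polynomial satisfies P_δ(M,z) = 2·z^{M_{vv}}·P_δ(M',z), where P_δ(N,z) = Σ_{A} z^{rank(N[A])+rank(N[A^c])}. -/
open Matrix Polynomial

theorem Submodule.finrank_prod {K M₁ M₂ : Type*} [Field K] [AddCommGroup M₁] [AddCommGroup M₂]
    [Module K M₁] [Module K M₂] [FiniteDimensional K M₁] [FiniteDimensional K M₂]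
    (p : Submodule K M₁) (q : Submodule K M₂) :
    Module.finrank K (p.prod q) = Module.finrank K p + Module.finrank K q := by
  have hinj : Function.Injective (p.subtype.prodMap q.subtype) :=
    Prod.map_injective.2 ⟨p.injective_subtype, q.injective_subtype⟩
  rw [← Module.finrank_prod, ← LinearMap.finrank_range_of_inj hinj, LinearMap.range_prodMap,
    Submodule.range_subtype, Submodule.range_subtype]

namespace Matrix

variable {K : Type*} [Field K]

theorem rank_fromBlocks_zero_zero {m₁ m₂ n₁ n₂ : Type*} [Fintype n₁] [Fintype n₂]
    [Fintype m₁] [Fintype m₂]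
    (A : Matrix m₁ n₁ K) (D : Matrix m₂ n₂ K) :
    (fromBlocks A 0 0 D).rank = A.rank + D.rank := by
  have hmul : (fromBlocks A 0 0 D).mulVecLin =
      (LinearEquiv.sumArrowLequivProdArrow m₁ m₂ K K).symm.toLinearMap ∘ₗ
        A.mulVecLin.prodMap D.mulVecLin ∘ₗ
          (LinearEquiv.sumArrowLequivProdArrow n₁ n₂ K K).toLinearMap := by
    ext x i
    rcases i with i | i <;> simp [mulVec, dotProduct, Fintype.sum_sum_type]
  rw [rank, hmul, LinearMap.range_comp, LinearMap.range_comp, LinearEquiv.range, Submodule.map_top,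
    LinearEquiv.finrank_map_eq, LinearMap.range_prodMap, Submodule.finrank_prod]
  rfl

theorem rank_eq_rank_toSquareBlockProp_add {ι : Type*} [Fintype ι] (N : Matrix ι ι K)
    (p : ι → Prop) [DecidablePred p] (h : ∀ i j, p i → ¬p j → N i j = 0 ∧ N j i = 0) :
    N.rank = (toSquareBlockProp N p).rank + (toSquareBlockProp N (¬p ·)).rank := by
  have hblocks : N.submatrix (Equiv.sumCompl p) (Equiv.sumCompl p) =
      fromBlocks (toSquareBlockProp N p) 0 0 (toSquareBlockProp N (¬p ·)) := by
    ext (i | i) (j | j)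
    · rfl
    · exact (h i j i.2 j.2).1
    · exact (h j i j.2 i.2).2
    · rfl
  rw [← rank_submatrix N (Equiv.sumCompl p) (Equiv.sumCompl p), hblocks, rank_fromBlocks_zero_zero]

theorem rank_submatrix_eq_of_range_eq {V ι κ : Type*} [Fintype ι] [Fintype κ] (N : Matrix V V K)
    {f : ι → V} {g : κ → V} (hf : Function.Injective f) (hg : Function.Injective g)
    (h : Set.range f = Set.range g) :
    (N.submatrix f f).rank = (N.submatrix g g).rank := by
  let e : ι ≃ κ :=
    (Equiv.ofInjective f hf).trans ((Equiv.setCongr h).trans (Equiv.ofInjective g hg).symm)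
  have hge : ∀ i, g (e i) = f i := fun i => Equiv.apply_ofInjective_symm hg _
  have : N.submatrix f f = (N.submatrix g g).submatrix e e := by
    ext i j
    simp [hge]
  rw [this, rank_submatrix]

theorem rank_of_unit_zmod_two (c : ZMod 2) : (of fun _ _ : Unit => c).rank = c.val := by
  obtain rfl | rfl : c = 0 ∨ c = 1 := (by decide : ∀ c : ZMod 2, c = 0 ∨ c = 1) c
  · exact rank_zero
  · have hone : (of fun _ _ : Unit => (1 : ZMod 2)) = 1 := by
      ext
      simp
    rw [hone, rank_one]
    rfl

end Matrix

namespace Finset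

variable {V : Type*} [Fintype V] [DecidableEq V]

theorem subtype_univ_sdiff (p : V → Prop) [DecidablePred p] (A : Finset V) :
    (univ \ A).subtype p = univ \ A.subtype p := by
  ext b
  simp [mem_subtype]

theorem sum_subtype_ne_eq_two_nsmul {β : Type*} [AddCommMonoid β] (v : V)
    (f : Finset {u : V // u ≠ v} → β) :
    ∑ A : Finset V, f (A.subtype (· ≠ v)) = 2 • ∑ B, f B := by
  have hlift : ∑ t ∈ (univ.erase v).powerset, f (t.subtype (· ≠ v)) = ∑ B, f B := by
    refine sum_nbij' (fun t => t.subtype (· ≠ v)) (fun B => B.map (Function.Embedding.subtype _))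
      ?_ ?_ ?_ ?_ ?_
    · simp
    · intro B _
      simp only [mem_powerset, subset_iff, mem_map, mem_erase]
      rintro _ ⟨b, -, rfl⟩
      exact ⟨b.2, mem_univ _⟩
    · intro t ht
      exact subtype_map_of_mem fun x hx => ne_of_mem_erase (mem_powerset.1 ht hx)
    · intro B _
      ext b
      exact mem_subtype.trans (mem_map' _)
    · intro t _
      rfl
  have hinsert (t : Finset V) : (insert v t).subtype (· ≠ v) = t.subtype (· ≠ v) := by
    ext b
    simp [mem_subtype, b.2]
  rw [← powerset_univ, ← insert_erase (mem_univ v), sum_powerset_insert (notMem_erase v _)]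
  simp_rw [hinsert, hlift, two_nsmul]

end Finset

theorem rank_psub_of_isolated {V K : Type*} [Fintype V] [DecidableEq V] [Field K]
    (M : Matrix V V K) (v : V)
    (hv : ∀ u : V, u ≠ v → M u v = 0 ∧ M v u = 0) (A : Finset V) :
    (psub M A).rank = (if v ∈ A then (of fun _ _ : Unit => M v v).rank else 0) +
      (psub (M.submatrix (fun a : {u : V // u ≠ v} => a.1) (fun a => a.1))
        (A.subtype (· ≠ v))).rank := by
  have hsplit : ∀ a b : A, a.1 = v → ¬b.1 = v → M a b = 0 ∧ M b a = 0 := by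
    rintro ⟨a, _⟩ ⟨b, _⟩ rfl hb
    exact (hv b hb).symm
  rw [rank_eq_rank_toSquareBlockProp_add (psub M A) (fun a => a.1 = v) hsplit]
  congr 1
  · split_ifs with hvA
    · refine rank_submatrix_eq_of_range_eq M (f := fun a : {a : A // a.1 = v} => a.1.1)
        (g := fun _ : Unit => v) ?_ ?_ ?_
      · exact fun a b _ => Subtype.ext (Subtype.ext (a.2.trans b.2.symm))
      · exact fun _ _ _ => rfl
      · ext x
        exact ⟨fun ⟨a, ha⟩ => ⟨(), a.2.symm.trans ha⟩, fun ⟨_, hx⟩ => ⟨⟨⟨v, hvA⟩, rfl⟩, hx⟩⟩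
    · have : IsEmpty {a : A // a.1 = v} := ⟨fun a => hvA (a.2 ▸ a.1.2)⟩
      rw [Subsingleton.elim (toSquareBlockProp (psub M A) fun a => a.1 = v) 0, rank_zero]
  · refine rank_submatrix_eq_of_range_eq M (f := fun a : {a : A // ¬a.1 = v} => a.1.1)
        (g := fun b : A.subtype (· ≠ v) => b.1.1) ?_ ?_ ?_
    · exact fun a b h => Subtype.ext (Subtype.ext h)
    · exact fun a b h => Subtype.ext (Subtype.ext h)
    · ext x
      exact ⟨fun ⟨a, ha⟩ => ⟨⟨⟨a.1.1, a.2⟩, Finset.mem_subtype.2 a.1.2⟩, ha⟩,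
        fun ⟨b, hb⟩ => ⟨⟨⟨b.1.1, Finset.mem_subtype.1 b.2⟩, b.1.2⟩, hb⟩⟩

theorem partialDelta_isolated_vertex
    {V : Type*} [Fintype V] [DecidableEq V]
    (M : Matrix V V (ZMod 2)) (v : V) (hv : ∀ u : V, u ≠ v → M u v = 0 ∧ M v u = 0) :
    (∑ A : Finset V, (X : Polynomial ℤ) ^
        ((psub M A).rank + (psub M (Finset.univ \ A)).rank)) =
      2 * (X : Polynomial ℤ) ^ (M v v).val *
        ∑ A : Finset {u : V // u ≠ v},
          ((X : Polynomial ℤ) ^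
            ((psub (M.submatrix (fun a : {u : V // u ≠ v} => a.1) (fun a => a.1)) A).rank +
             (psub (M.submatrix (fun a : {u : V // u ≠ v} => a.1) (fun a => a.1))
               (Finset.univ \ A)).rank)) := by
  have hrank := rank_psub_of_isolated M v hv
  set M' := M.submatrix (fun a : {u : V // u ≠ v} => a.1) (fun a : {u : V // u ≠ v} => a.1)
  have hsummand (A : Finset V) :
      (X : ℤ[X]) ^ ((psub M A).rank + (psub M (Finset.univ \ A)).rank) =
        X ^ (M v v).val * X ^ ((psub M' (A.subtype (· ≠ v))).rank +
          (psub M' (Finset.univ \ A.subtype (· ≠ v))).rank) := by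
    rw [hrank, hrank, Finset.subtype_univ_sdiff, rank_of_unit_zmod_two, ← pow_add]
    congr 1
    simp only [Finset.mem_sdiff, Finset.mem_univ, true_and]
    split_ifs <;> omega
  rw [Finset.sum_congr rfl fun A _ => hsummand A, ← Finset.mul_sum,
    Finset.sum_subtype_ne_eq_two_nsmul v
      fun B => (X : ℤ[X]) ^ ((psub M' B).rank + (psub M' (Finset.univ \ B)).rank), nsmul_eq_mul]
  push_cast
  ring
end
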